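/- arXiv:1103.3803 — 3 statements merged into one kernel-verified Lean document; each statement's English description precedes it below -/
import Mathlib

section
/- If η is an (n+d)(n-1)-th root of unity and ν = η^(n+d), then for every k ≥ 1 and nonzero z ∈ ℂ (assuming all iterates are nonzero), F_{νλ}^k(η z) = η^(n^k) · F_λ^k(z). -/
lemma step_aux (n d : ℕ) (hn : 2 ≤ n) (hd : 1 ≤ d) (lam η : ℂ)
    (hη : η ^ ((n + d) * (n - 1)) = 1) (j : ℕ) (w : ℂ) (hw : w ≠ 0) :
    (η ^ n ^ j * w) ^ n + (η ^ (n + d) * lam) / (η ^ n ^ j * w) ^ d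
      = η ^ n ^ (j + 1) * (w ^ n + lam / w ^ d) := by
  have hη0 : η ≠ 0 := by
    intro h
    rw [h, zero_pow] at hη
    · exact one_ne_zero hη.symm
    · exact Nat.mul_ne_zero (by omega) (by omega)
  have h1 : 1 ≤ n ^ j := Nat.one_le_pow _ _ (by omega)
  obtain ⟨m, hm⟩ := Nat.sub_dvd_pow_sub_pow n 1 j
  rw [one_pow] at hm
  have hnj : n ^ j = (n - 1) * m + 1 := by omega
  have hkey : η ^ ((n + d) * n ^ j) = η ^ (n + d) := by
    rw [hnj]
    rw [mul_add, mul_one, pow_add]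
    rw [show (n + d) * ((n - 1) * m) = (n + d) * (n - 1) * m by ring, pow_mul, hη,
      one_pow, one_mul]
  have hsplit : η ^ (n + d) = η ^ n ^ (j + 1) * η ^ (n ^ j * d) := by
    rw [← hkey, ← pow_add]
    congr 1
    ring
  rw [mul_pow, mul_pow, ← pow_mul, ← pow_mul, show n ^ j * n = n ^ (j + 1) by ring,
    hsplit]
  have hηj : η ^ (n ^ j * d) ≠ 0 := pow_ne_zero _ hη0
  have hwd : w ^ d ≠ 0 := pow_ne_zero _ hw
  field_simp

/-- Symmetry Lemma 3: F_{νλ}^k(η z) = η^(n^k) F_λ^k(z). -/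
theorem stmt_2 (n d : ℕ) (hn : 2 ≤ n) (hd : 1 ≤ d) (lam η : ℂ)
    (hη : η ^ ((n + d) * (n - 1)) = 1) (ν : ℂ) (hν : ν = η ^ (n + d))
    (F : ℂ → ℂ → ℂ) (hF : ∀ μ z, F μ z = z ^ n + μ / z ^ d)
    (k : ℕ) (hk : 1 ≤ k) (z : ℂ) (hz : z ≠ 0)
    (hiter : ∀ j < k, (F lam)^[j] z ≠ 0 ∧ (F (ν * lam))^[j] (η * z) ≠ 0) :
    (F (ν * lam))^[k] (η * z) = η ^ (n ^ k) * (F lam)^[k] z := by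
  induction k, hk using Nat.le_induction with
  | base =>
    simp only [Function.iterate_one, hF]
    rw [hν]
    have := step_aux n d hn hd lam η hη 0 z hz
    simpa using this
  | succ k hk1 IH =>
    have hik : ∀ j < k, (F lam)^[j] z ≠ 0 ∧ (F (ν * lam))^[j] (η * z) ≠ 0 :=
      fun j hj => hiter j (by omega)
    have hwk : (F lam)^[k] z ≠ 0 := (hiter k (by omega)).1
    rw [Function.iterate_succ_apply', Function.iterate_succ_apply', IH hik,
      hF, hF, hν]
    exact step_aux n d hn hd lam η hη k _ hwk
end

section
/- If η^((n+d)(n-1)) = 1, ν = η^(n+d), and ω = η^(n-1), then for all nonzero z ∈ ℂ, F_{νλ}(η z) = η·ω · F_λ(z); in particular z ↦ η z conjugates ω·F_λ to F_{νλ}. -/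
/-- F_{νλ}(η z) = η ω F_λ(z) where ν = η^(n+d), ω = η^(n-1). -/
theorem stmt_3 (n d : ℕ) (hn : 2 ≤ n) (hd : 1 ≤ d) (lam η : ℂ)
    (hη : η ^ ((n + d) * (n - 1)) = 1) (ν ω : ℂ)
    (hν : ν = η ^ (n + d)) (hω : ω = η ^ (n - 1))
    (F : ℂ → ℂ → ℂ) (hF : ∀ μ z, F μ z = z ^ n + μ / z ^ d) :
    ∀ z : ℂ, z ≠ 0 → F (ν * lam) (η * z) = η * ω * F lam z := by
  intro z hz
  have hηne : η ≠ 0 := by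
    intro h
    rw [h, zero_pow (Nat.mul_ne_zero (by omega) (by omega))] at hη
    exact one_ne_zero hη.symm
  rw [hF, hF, hν, hω]
  have h1 : η * η ^ (n - 1) = η ^ n := by
    rw [← pow_succ']
    congr 1
    omega
  have h2 : η ^ (n + d) = η ^ n * η ^ d := by rw [pow_add]
  rw [h1, h2, mul_pow]
  field_simp
  ring
end

section
/- The number of orbits of the dihedral group of order 2a (a = (n−1)/g, g = gcd(n−1, d+1)) acting on ℤ/(n−1) by r·k = k+g and s·k = −k equals (g+1)/2 if g is odd, and 1 + g/2 if g is even. -/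
section aux

variable {m g : ℕ}

/-- The subgroup-coset description: x = y + j*g iff they have the same image mod g. -/
lemma aux_cast_eq_iff [NeZero m] [NeZero g] (h : g ∣ m) (x y : ZMod m) :
    (ZMod.castHom h (ZMod g)) x = (ZMod.castHom h (ZMod g)) y ↔
      ∃ j : ℤ, x = y + j * (g : ZMod m) := by
  constructor
  · intro hxy
    have h0 : (ZMod.castHom h (ZMod g)) (x - y) = 0 := by
      rw [map_sub, hxy, sub_self]
    have hv : ((x - y).val : ZMod m) = x - y := by
      simp [ZMod.natCast_val, ZMod.cast_id]
    have h1 : (((x - y).val : ℕ) : ZMod g) = 0 := by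
      have := map_natCast (ZMod.castHom h (ZMod g)) ((x - y).val)
      rw [hv] at this
      rw [← this, h0]
    have h2 : g ∣ (x - y).val := (ZMod.natCast_eq_zero_iff _ _).mp h1
    obtain ⟨t, ht⟩ := h2
    refine ⟨t, ?_⟩
    have : x - y = ((g * t : ℕ) : ZMod m) := by rw [← ht, hv]
    push_cast at this ⊢
    linear_combination this
  · rintro ⟨j, rfl⟩
    rw [map_add, map_mul]
    have : (ZMod.castHom h (ZMod g)) ((g : ℕ) : ZMod m) = 0 := by
      rw [map_natCast, ZMod.natCast_self]
    rw [this, mul_zero, add_zero]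

/-- The orbit of k is the preimage of the pair {cast k, -cast k}. -/
lemma aux_orbit_eq_preimage [NeZero m] [NeZero g] (h : g ∣ m) (k : ZMod m) :
    {k' : ZMod m | ∃ j : ℤ, k' = k + j * (g : ZMod m) ∨ k' = -k + j * (g : ZMod m)} =
      (ZMod.castHom h (ZMod g)) ⁻¹'
        {(ZMod.castHom h (ZMod g)) k, -(ZMod.castHom h (ZMod g)) k} := by
  ext k'
  simp only [Set.mem_setOf_eq, Set.mem_preimage, Set.mem_insert_iff, Set.mem_singleton_iff]
  rw [← map_neg]
  rw [aux_cast_eq_iff h k' k, aux_cast_eq_iff h k' (-k)]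
  constructor
  · rintro ⟨j, hj | hj⟩
    exacts [Or.inl ⟨j, hj⟩, Or.inr ⟨j, hj⟩]
  · rintro (⟨j, hj⟩ | ⟨j, hj⟩)
    exacts [⟨j, Or.inl hj⟩, ⟨j, Or.inr hj⟩]

/-- The castHom to ZMod g is surjective. -/
lemma aux_cast_surj [NeZero m] [NeZero g] (h : g ∣ m) :
    Function.Surjective (ZMod.castHom h (ZMod g)) := by
  intro c
  refine ⟨((c.val : ℕ) : ZMod m), ?_⟩
  rw [map_natCast]
  simp [ZMod.natCast_val, ZMod.cast_id]

/-- Counting the unordered pairs {c, -c} in ZMod g. -/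
lemma aux_count (g : ℕ) (hg : 0 < g) :
    (Set.range (fun c : ZMod g => ({c, -c} : Set (ZMod g)))).ncard =
      if Odd g then (g + 1) / 2 else 1 + g / 2 := by
  haveI : NeZero g := ⟨hg.ne'⟩
  set N : ℕ := if Odd g then (g + 1) / 2 else 1 + g / 2 with hN
  have hparity : (g % 2 = 1 ∧ N = (g + 1) / 2) ∨ (g % 2 = 0 ∧ N = 1 + g / 2) := by
    rcases Nat.even_or_odd g with he | ho
    · right
      refine ⟨Nat.even_iff.mp he, ?_⟩
      rw [hN, if_neg (by simpa [Nat.not_odd_iff_even] using he)]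
    · left
      exact ⟨Nat.odd_iff.mp ho, by rw [hN, if_pos ho]⟩
  have hNle : N ≤ g := by omega
  have hNpos : 0 < N := by omega
  have h2N : g < 2 * N := by omega
  set e : Fin N → Set (ZMod g) := fun v => {((v : ℕ) : ZMod g), -((v : ℕ) : ZMod g)} with he
  have hrange : Set.range (fun c : ZMod g => ({c, -c} : Set (ZMod g))) = Set.range e := by
    ext S
    constructor
    · rintro ⟨c, rfl⟩
      by_cases hc : c.val < N
      · refine ⟨⟨c.val, hc⟩, ?_⟩
        simp [he, ZMod.natCast_val, ZMod.cast_id]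
      · have hcg : c.val < g := ZMod.val_lt c
        refine ⟨⟨g - c.val, by omega⟩, ?_⟩
        have hcast : ((g - c.val : ℕ) : ZMod g) = -c := by
          have h1 : ((g - c.val : ℕ) : ZMod g) = ((g : ℕ) : ZMod g) - ((c.val : ℕ) : ZMod g) := by
            rw [Nat.cast_sub (le_of_lt hcg)]
          rw [h1, ZMod.natCast_self]
          simp [ZMod.natCast_val, ZMod.cast_id]
        simp only [he, hcast, neg_neg]
        exact (Set.pair_comm _ _)
    · rintro ⟨v, rfl⟩
      exact ⟨((v : ℕ) : ZMod g), rfl⟩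
  have hinj : Function.Injective e := by
    intro v w hvw
    have hv : ((v : ℕ) : ZMod g) ∈ e w := hvw ▸ Set.mem_insert _ _
    simp only [he, Set.mem_insert_iff, Set.mem_singleton_iff] at hv
    have hvN : (v : ℕ) < N := v.isLt
    have hwN : (w : ℕ) < N := w.isLt
    rcases hv with hv | hv
    · -- equal casts, both values < g
      have : (v : ℕ) = (w : ℕ) := by
        have h1 : (((v : ℕ) : ZMod g)).val = (((w : ℕ) : ZMod g)).val := by rw [hv]
        rwa [ZMod.val_cast_of_lt (by omega), ZMod.val_cast_of_lt (by omega)] at h1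
      exact Fin.ext this
    · -- v ≡ -w, so g ∣ v + w
      have hsum : (((v : ℕ) + (w : ℕ) : ℕ) : ZMod g) = 0 := by
        push_cast
        rw [hv]
        ring
      have hdvd : g ∣ (v : ℕ) + (w : ℕ) := (ZMod.natCast_eq_zero_iff _ _).mp hsum
      have hbound : (v : ℕ) + (w : ℕ) ≤ g := by omega
      rcases lt_or_eq_of_le hbound with hlt | heq
      · have h0 : (v : ℕ) + (w : ℕ) = 0 := Nat.eq_zero_of_dvd_of_lt hdvd hlt
        exact Fin.ext (by omega)
      · -- sum = g; with v,w ≤ N-1 and 2N-2 ≤ g this forces v = w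
        have : (v : ℕ) = (w : ℕ) := by omega
        exact Fin.ext this
  rw [hrange, ← Set.image_univ, Set.ncard_image_of_injective _ hinj]
  rw [Set.ncard_univ]
  simp [Nat.card_eq_fintype_card]

end aux

/-- The number of orbits of the dihedral action (r : k ↦ k+g, s : k ↦ -k)
on ℤ/(n-1) is (g+1)/2 if g is odd and 1 + g/2 if g is even. -/
theorem stmt_16 (n d : ℕ) (hn : 2 ≤ n) (hd : 1 ≤ d)
    (g : ℕ) (hg : g = Nat.gcd (n - 1) (d + 1)) :
    {S : Set (ZMod (n - 1)) | ∃ k : ZMod (n - 1),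
        S = {k' | ∃ j : ℤ, k' = k + j * g ∨ k' = -k + j * g}}.ncard =
      if Odd g then (g + 1) / 2 else 1 + g / 2 := by
  set m := n - 1 with hm
  have hmpos : 0 < m := by omega
  have hgpos : 0 < g := by
    rw [hg]; exact Nat.gcd_pos_of_pos_right _ (by omega)
  haveI : NeZero m := ⟨hmpos.ne'⟩
  haveI : NeZero g := ⟨hgpos.ne'⟩
  have hdvd : g ∣ m := hg ▸ Nat.gcd_dvd_left _ _
  set f := ZMod.castHom hdvd (ZMod g) with hf
  have hset : {S : Set (ZMod m) | ∃ k : ZMod m,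
      S = {k' | ∃ j : ℤ, k' = k + j * g ∨ k' = -k + j * g}} =
      (fun T => f ⁻¹' T) '' (Set.range (fun c : ZMod g => ({c, -c} : Set (ZMod g)))) := by
    ext S
    constructor
    · rintro ⟨k, rfl⟩
      exact ⟨{f k, -(f k)}, ⟨f k, rfl⟩, (aux_orbit_eq_preimage hdvd k).symm⟩
    · rintro ⟨T, ⟨c, rfl⟩, rfl⟩
      obtain ⟨k, rfl⟩ := aux_cast_surj hdvd c
      refine ⟨k, ?_⟩
      exact (aux_orbit_eq_preimage hdvd k).symm
  rw [hset, Set.ncard_image_of_injective _ (Function.Surjective.preimage_injective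
    (aux_cast_surj hdvd))]
  exact aux_count g hgpos
end
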